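/- arXiv:2407.17455 — 2 statements merged into one kernel-verified Lean document; each statement's English description precedes it below -/
import Mathlib

section
/- Let n, p, s be natural numbers with 1 ≤ 2p + s and 2p + s ≤ n. Then every intersecting family F ⊆ H^{(p,s)}(n) satisfies 2n · |F| ≤ (2p + s) · C(n, p) · C(n − p, s) · 2^s, where C denotes the binomial coefficient. -/
/-- The family `H^{(p,s)}(n)`: subsets of `V(M_n) = Fin n × Bool` of cardinality `2p+s`
spanning exactly `p` edges of the perfect matching `M_n`
(whose `i`-th edge joins `(i, false)` and `(i, true)`). -/
def matchFamily (n p s : ℕ) : Finset (Finset (Fin n × Bool)) :=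
  Finset.univ.filter (fun H : Finset (Fin n × Bool) =>
    H.card = 2 * p + s ∧
    (Finset.univ.filter (fun i : Fin n => (i, false) ∈ H ∧ (i, true) ∈ H)).card = p)
/-- A family of finsets is intersecting if any two of its members intersect. -/
def IsIntersecting {α : Type*} [DecidableEq α] (F : Finset (Finset α)) : Prop :=
  ∀ A ∈ F, ∀ B ∈ F, (A ∩ B).Nonempty


/-
Katona's circle method. The permutations of `Fin n × Bool` commuting with the swap of the two
ends of every edge form a group acting transitively on `H = H^{(p,s)}(n)`, so by double counting
the density of an intersecting `F` in `H` is at most the largest fraction of pairwise intersecting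
sets in any fixed list of members of `H`. The list used is the `2n / c` arcs of length
`k = 2p + s` starting at the multiples of `c` in a cyclic order of the `2n` vertices in which
each such arc spans exactly `p` edges; by Katona's circle lemma at most `k / c` of them pairwise
intersect. For `p = 0` the vertex `(i, b)` is put at position `i + n b` and `c = 1`; otherwise
`(i, b)` is put at `2i + d b`, with `d = s`, `c = 1` for odd `s` and `d = s + 1`, `c = 2` for
even `s`. Finally `|H| ≤ C(n, p) C(n - p, s) 2^s`.
-/

open Finset Function Pointwise Equiv

section Averaging

variable {G β : Type*} [Group G] [Fintype G] [MulAction G β] [DecidableEq β]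

lemma card_mul_card_filter_smul_eq {𝓗 : Finset β} (hmaps : ∀ g : G, ∀ A ∈ 𝓗, g • A ∈ 𝓗)
    (htrans : ∀ A ∈ 𝓗, ∀ B ∈ 𝓗, ∃ g : G, g • A = B) {B A : β} (hB : B ∈ 𝓗) (hA : A ∈ 𝓗) :
    #𝓗 * #{g : G | g • B = A} = Fintype.card G := by
  have fiber_le : ∀ A ∈ 𝓗, ∀ A' ∈ 𝓗, #{g : G | g • B = A} ≤ #{g : G | g • B = A'} := by
    intro A hA A' hA'
    obtain ⟨u, hu⟩ := htrans A hA A' hA'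
    refine card_le_card_of_injOn (u * ·) (fun g hg => ?_) fun g _ g' _ h => mul_left_cancel h
    simp only [coe_filter, mem_univ, true_and, Set.mem_ofPred_eq] at hg ⊢
    rw [mul_smul, hg, hu]
  have hsum : Fintype.card G = ∑ A' ∈ 𝓗, #{g : G | g • B = A'} :=
    card_eq_sum_card_fiberwise fun g _ => hmaps g B hB
  rw [hsum, sum_congr rfl fun A' hA' => (fiber_le A' hA' A hA).antisymm (fiber_le A hA A' hA'),
    sum_const, smul_eq_mul]

lemma card_mul_card_filter_smul_mem {𝓗 F : Finset β} (hmaps : ∀ g : G, ∀ A ∈ 𝓗, g • A ∈ 𝓗)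
    (htrans : ∀ A ∈ 𝓗, ∀ B ∈ 𝓗, ∃ g : G, g • A = B) (hF : F ⊆ 𝓗) {B : β} (hB : B ∈ 𝓗) :
    #𝓗 * #{g : G | g • B ∈ F} = #F * Fintype.card G := by
  rw [card_eq_sum_card_fiberwise (s := {g : G | g • B ∈ F}) (t := F) (f := (· • B))
      fun g hg => (mem_filter.mp hg).2,
    mul_sum, ← smul_eq_mul, ← sum_const]
  refine sum_congr rfl fun A hA => ?_
  rw [filter_filter, ← card_mul_card_filter_smul_eq hmaps htrans hB (hF hA)]
  have hmem : ∀ g : G, g • B ∈ F ∧ g • B = A ↔ g • B = A :=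
    fun g => ⟨And.right, fun h => ⟨h ▸ hA, h⟩⟩
  simp only [hmem]

variable {α ι : Type*} [MulAction G α] [DecidableEq α] [Fintype ι]

/-- Katona's averaging argument. -/
theorem IsIntersecting.card_mul_le {𝓗 F : Finset (Finset α)} (hint : IsIntersecting F)
    (hF : F ⊆ 𝓗) (hmaps : ∀ g : G, ∀ A ∈ 𝓗, g • A ∈ 𝓗)
    (htrans : ∀ A ∈ 𝓗, ∀ B ∈ 𝓗, ∃ g : G, g • A = B) {B : ι → Finset α} (hB : ∀ j, B j ∈ 𝓗)
    {t : ℕ} (hBt : ∀ S : Finset ι, (∀ j ∈ S, ∀ j' ∈ S, (B j ∩ B j').Nonempty) → #S ≤ t) :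
    Fintype.card ι * #F ≤ t * #𝓗 := by
  have per_g : ∀ g : G, #{j | g • B j ∈ F} ≤ t := fun g => hBt _ fun j hj j' hj' => by
    simp only [mem_filter, mem_univ, true_and] at hj hj'
    simpa only [← smul_finset_inter, smul_finset_nonempty] using hint _ hj _ hj'
  have double_count : ∑ j, #{g : G | g • B j ∈ F} = ∑ g : G, #{j | g • B j ∈ F} :=
    sum_card_bipartiteAbove_eq_sum_card_bipartiteBelow fun j (g : G) => g • B j ∈ F
  have key : Fintype.card ι * #F * Fintype.card G ≤ t * #𝓗 * Fintype.card G :=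
    calc Fintype.card ι * #F * Fintype.card G
        = #𝓗 * ∑ j, #{g : G | g • B j ∈ F} := by
          rw [mul_sum, sum_congr rfl fun j _ =>
            card_mul_card_filter_smul_mem hmaps htrans hF (hB j), sum_const, card_univ,
            smul_eq_mul, mul_assoc]
      _ ≤ #𝓗 * (Fintype.card G • t) := by
          rw [double_count, ← card_univ]
          exact Nat.mul_le_mul_left _ (sum_le_card_nsmul _ _ _ fun g _ => per_g g)
      _ = t * #𝓗 * Fintype.card G := by rw [smul_eq_mul]; ring
  exact Nat.le_of_mul_le_mul_right key Fintype.card_pos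

end Averaging

section Circle

variable {α : Type*} [DecidableEq α]

/-- Katona's circle lemma. Fixing `j₀ ∈ S`, every `j ∈ S` has offset `(j - j₀).val` in
`[0, t) ∪ (m - t, m)`, and offsets `D` and `D + (m - t)` exclude each other. -/
theorem card_le_of_disjoint_of_inter_nonempty {m t : ℕ} [NeZero m] (ht : 2 * t ≤ m)
    (W : ZMod m → Finset α) (hW : ∀ j (d : ℕ), t ≤ d → d + t ≤ m → Disjoint (W j) (W (j + d)))
    {S : Finset (ZMod m)} (hS : ∀ j ∈ S, ∀ j' ∈ S, (W j ∩ W j').Nonempty) : #S ≤ t := by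
  obtain rfl | ⟨j₀, hj₀⟩ := S.eq_empty_or_nonempty
  · simp
  set D : ZMod m → ℕ := fun j => (j - j₀).val
  have hDlt : ∀ j, D j < m := fun j => ZMod.val_lt _
  have hD : ∀ j ∈ S, D j < t ∨ m - t < D j := fun j hj => by
    by_contra! h
    have hjD : j₀ + (D j : ZMod m) = j := by simp [D]
    have hdisj := hW j₀ (D j) h.1 (by omega)
    rw [hjD] at hdisj
    exact not_disjoint_iff_nonempty_inter.mpr (hS j₀ hj₀ j hj) hdisj
  have hshift : ∀ j ∈ S, ∀ j' ∈ S, D j' ≠ D j + (m - t) := fun j hj j' hj' h => by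
    have hjj' : j + ((m - t : ℕ) : ZMod m) = j' := by
      have := congrArg (Nat.cast : ℕ → ZMod m) h
      simp only [D, ZMod.natCast_zmod_val, Nat.cast_add] at this
      linear_combination -this
    have hdisj := hW j (m - t) (by omega) (by omega)
    rw [hjj'] at hdisj
    exact not_disjoint_iff_nonempty_inter.mpr (hS j hj j' hj') hdisj
  refine (card_le_card_of_injOn (fun j => if D j < t then D j else D j + t - m)
    (fun j hj => ?_) fun j hj j' hj' h => ?_).trans (card_range t).le
  · have := hD j hj
    have := hDlt j
    simp only [coe_range, Set.mem_Iio]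
    split_ifs <;> omega
  · have := hshift j hj j' hj'
    have := hshift j' hj' j hj
    have := hD j hj
    have := hD j' hj'
    have hDj : D j = D j' := by
      simp only at h
      split_ifs at h <;> omega
    exact sub_left_injective (ZMod.val_injective m hDj)

end Circle

section Arc

lemma ZMod.val_lt_and_val_add_lt_iff {N : ℕ} [NeZero N] (z : ZMod N) {k d : ℕ} (h : k + d ≤ N) :
    z.val < k ∧ (z + d).val < k ↔ z.val + d < k := by
  rcases Nat.eq_zero_or_pos k with rfl | hk
  · simp
  rw [ZMod.val_add, ZMod.val_natCast_of_lt (by omega)]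
  have := z.val_lt
  constructor
  · rintro ⟨hz, hzd⟩
    rwa [Nat.mod_eq_of_lt (by omega)] at hzd
  · intro hzd
    rw [Nat.mod_eq_of_lt (by omega)]
    omega

variable {α : Type*} [Fintype α] {N : ℕ}

/-- `pos` is read as a cyclic order of `α`, and `arc pos k y` as its `k` consecutive elements
starting at position `y`. -/
def arc (pos : α → ZMod N) (k : ℕ) (y : ZMod N) : Finset α := {v | (pos v - y).val < k}

@[simp]
lemma mem_arc {pos : α → ZMod N} {k : ℕ} {y : ZMod N} {v : α} :
    v ∈ arc pos k y ↔ (pos v - y).val < k := by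
  simp [arc]

variable [NeZero N]

lemma card_arc {pos : α → ZMod N} (hpos : Bijective pos) {k : ℕ} (hk : k ≤ N) (y : ZMod N) :
    #(arc pos k y) = k := by
  set e := Equiv.ofBijective pos hpos
  have hval : ∀ r < k, ((r : ZMod N)).val = r := fun r hr => by
    rw [ZMod.val_natCast, Nat.mod_eq_of_lt (by omega)]
  refine ((card_bij (s := range k) (fun r _ => e.symm (y + r)) (fun r hr => ?_)
    (fun r hr r' hr' h => ?_) fun v hv => ?_).symm.trans (card_range k))
  · have hr := mem_range.mp hr
    rw [mem_arc]
    change (e (e.symm (y + r)) - y).val < k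
    rwa [e.apply_symm_apply, add_sub_cancel_left, hval r hr]
  · have := congrArg ZMod.val (add_left_cancel (e.symm.injective h))
    rwa [hval r (mem_range.mp hr), hval r' (mem_range.mp hr')] at this
  · exact ⟨_, mem_range.mpr (mem_arc.mp hv), by simp [e]⟩

lemma disjoint_arc (pos : α → ZMod N) {k d : ℕ} (hkd : k ≤ d) (hdk : d + k ≤ N) (y : ZMod N) :
    Disjoint (arc pos k y) (arc pos k (y + d)) := by
  rw [disjoint_left]
  intro v hv hv'
  rw [mem_arc] at hv hv'
  set z := pos v - y
  rw [show pos v - (y + d) = z - d by ring] at hv'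
  have hz : z.val = ((z - d).val + d) % N := by
    conv_lhs => rw [← sub_add_cancel z (d : ZMod N)]
    rw [ZMod.val_add, ZMod.val_natCast_of_lt (by omega)]
  rw [Nat.mod_eq_of_lt (by omega)] at hz
  omega

theorem card_le_of_arc_inter_nonempty [DecidableEq α] {m : ℕ} [NeZero m] (pos : α → ZMod N)
    {c t : ℕ} (hc : c * m = N) (ht : 2 * (c * t) ≤ N) {S : Finset (ZMod m)}
    (hS : ∀ j ∈ S, ∀ j' ∈ S,
      (arc pos (c * t) (c * j.val : ℕ) ∩ arc pos (c * t) (c * j'.val : ℕ)).Nonempty) :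
    #S ≤ t := by
  have hc₀ : 0 < c := Nat.pos_of_ne_zero fun h => NeZero.ne N (by rw [← hc, h, zero_mul])
  refine card_le_of_disjoint_of_inter_nonempty ?_ _ (fun j d htd hdt => ?_) hS
  · rw [← hc, ← mul_assoc, mul_comm 2 c, mul_assoc] at ht
    exact Nat.le_of_mul_le_mul_left ht hc₀
  · have hshift : ((c * (j + d : ZMod m).val : ℕ) : ZMod N) = (c * j.val : ℕ) + (c * d : ℕ) := by
      rw [← Nat.cast_add, ← mul_add, ← ZMod.natCast_mod (c * (j.val + d)), ← hc,
        Nat.mul_mod_mul_left, ← ZMod.val_natCast, Nat.cast_add, ZMod.natCast_zmod_val]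
    rw [hshift]
    exact disjoint_arc pos (Nat.mul_le_mul_left c htd)
      (by rw [← hc, ← mul_add]; exact Nat.mul_le_mul_left c hdt) _

end Arc

section Matching

variable {n p s : ℕ}

/-- The involution exchanging the two ends of every edge of `M_n`; its centralizer is the
automorphism group of `M_n`. -/
def matchingSwap : Perm (Fin n × Bool) := Equiv.prodCongrRight fun _ => Equiv.boolNot

def spannedEdges (A : Finset (Fin n × Bool)) : Finset (Fin n) :=
  {i | (i, false) ∈ A ∧ (i, true) ∈ A}

def edgeTrace (A : Finset (Fin n × Bool)) (i : Fin n) : Finset Bool := {b | (i, b) ∈ A}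

lemma mem_matchFamily {A : Finset (Fin n × Bool)} :
    A ∈ matchFamily n p s ↔ #A = 2 * p + s ∧ #(spannedEdges A) = p := by
  simp [matchFamily, spannedEdges]

lemma filter_matchingSwap_mem (A : Finset (Fin n × Bool)) :
    {v ∈ A | matchingSwap v ∈ A} = spannedEdges A ×ˢ univ := by
  ext ⟨i, b⟩
  rw [mem_filter, mem_product]
  cases b <;> simp [matchingSwap, spannedEdges, and_comm]

lemma card_spannedEdges_smul {g : Perm (Fin n × Bool)}
    (hg : g ∈ Subgroup.centralizer {matchingSwap}) (A : Finset (Fin n × Bool)) :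
    #(spannedEdges (g • A)) = #(spannedEdges A) := by
  have hcomm : ∀ v, matchingSwap (g • v) = g • matchingSwap v := fun v =>
    (DFunLike.congr_fun (Subgroup.mem_centralizer_singleton_iff.mp hg) v).symm
  have hfilter : {v ∈ g • A | matchingSwap v ∈ g • A} = g • {v ∈ A | matchingSwap v ∈ A} := by
    rw [smul_finset_def, smul_finset_def, filter_image]
    congr 1
    exact filter_congr fun v _ => by rw [← smul_finset_def, hcomm, smul_mem_smul_finset_iff]
  have hcard := congrArg card hfilter
  rw [card_smul_finset, filter_matchingSwap_mem, filter_matchingSwap_mem, card_product,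
    card_product] at hcard
  simpa using hcard

lemma smul_mem_matchFamily {g : Perm (Fin n × Bool)}
    (hg : g ∈ Subgroup.centralizer {matchingSwap}) {A : Finset (Fin n × Bool)}
    (hA : A ∈ matchFamily n p s) : g • A ∈ matchFamily n p s := by
  rw [mem_matchFamily] at hA ⊢
  rwa [card_smul_finset, card_spannedEdges_smul hg]

lemma filter_card_edgeTrace_eq_two (A : Finset (Fin n × Bool)) :
    ({i | #(edgeTrace A i) = 2} : Finset (Fin n)) = spannedEdges A := by
  ext i
  rw [mem_filter, ← Fintype.card_bool, card_eq_iff_eq_univ, eq_univ_iff_forall]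
  simp [edgeTrace, spannedEdges, Bool.forall_bool]

lemma card_edgeTrace_le (A : Finset (Fin n × Bool)) (i : Fin n) : #(edgeTrace A i) ≤ 2 :=
  card_le_univ _

lemma card_eq_sum_card_edgeTrace (A : Finset (Fin n × Bool)) : #A = ∑ i, #(edgeTrace A i) := by
  rw [card_eq_sum_card_fiberwise (f := Prod.fst) (t := univ) fun _ _ => mem_coe.mpr (mem_univ _)]
  refine sum_congr rfl fun i _ => ?_
  rw [← card_map (Embedding.sectR i Bool)]
  congr 1
  ext ⟨j, b⟩
  simp only [mem_filter, edgeTrace, mem_map, mem_univ, true_and, Embedding.sectR_apply]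
  aesop

lemma card_filter_card_edgeTrace (A : Finset (Fin n × Bool)) :
    #{i | #(edgeTrace A i) = 0} + #{i | #(edgeTrace A i) = 1} + #{i | #(edgeTrace A i) = 2} = n ∧
      #{i | #(edgeTrace A i) = 1} + 2 * #{i | #(edgeTrace A i) = 2} = #A := by
  have hmaps : Set.MapsTo (fun i => #(edgeTrace A i)) (univ : Finset (Fin n)) (range 3) :=
    fun i _ => mem_range.mpr (Nat.lt_succ_of_le (card_edgeTrace_le A i))
  constructor
  · have := card_eq_sum_card_fiberwise hmaps
    simp only [sum_range_succ, sum_range_zero, card_univ, Fintype.card_fin] at this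
    omega
  · rw [card_eq_sum_card_edgeTrace, ← sum_fiberwise_of_maps_to hmaps]
    simp only [sum_range_succ, sum_range_zero]
    rw [sum_const_nat fun i hi => (mem_filter.mp hi).2,
      sum_const_nat fun i hi => (mem_filter.mp hi).2,
      sum_const_nat fun i hi => (mem_filter.mp hi).2]
    ring

lemma card_filter_card_edgeTrace_eq {A B : Finset (Fin n × Bool)} (hA : A ∈ matchFamily n p s)
    (hB : B ∈ matchFamily n p s) (c : ℕ) :
    #{i | #(edgeTrace A i) = c} = #{i | #(edgeTrace B i) = c} := by
  obtain ⟨hA₀, hA₁⟩ := card_filter_card_edgeTrace A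
  obtain ⟨hB₀, hB₁⟩ := card_filter_card_edgeTrace B
  rw [mem_matchFamily, ← filter_card_edgeTrace_eq_two] at hA hB
  by_cases hc : c ≤ 2
  · interval_cases c <;> omega
  have hempty : ∀ C : Finset (Fin n × Bool), #{i | #(edgeTrace C i) = c} = 0 := fun C => by
    rw [card_eq_zero, filter_eq_empty_iff]
    exact fun i _ => by have := card_edgeTrace_le C i; omega
  rw [hempty, hempty]

lemma exists_perm_card_edgeTrace {A B : Finset (Fin n × Bool)} (hA : A ∈ matchFamily n p s)
    (hB : B ∈ matchFamily n p s) :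
    ∃ π : Perm (Fin n), ∀ i, #(edgeTrace B (π i)) = #(edgeTrace A i) :=
  ⟨_, ofFiberEquiv_map (f := fun i => #(edgeTrace A i)) (g := fun i => #(edgeTrace B i))
    fun c => Fintype.equivOfCardEq <| by
      rw [Fintype.card_subtype, Fintype.card_subtype, card_filter_card_edgeTrace_eq hA hB]⟩

lemma Equiv.Perm.apply_not_bool (τ : Perm Bool) (b : Bool) : τ (!b) = !τ b :=
  Bool.eq_not_iff.mpr (τ.injective.ne (Bool.not_ne_self b))

lemma exists_mem_centralizer_smul_eq {A B : Finset (Fin n × Bool)} (hA : A ∈ matchFamily n p s)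
    (hB : B ∈ matchFamily n p s) :
    ∃ g ∈ Subgroup.centralizer {matchingSwap (n := n)}, g • A = B := by
  obtain ⟨π, hπ⟩ := exists_perm_card_edgeTrace hA hB
  choose τ hτ using fun i =>
    Perm.exists_map_finset_eq (edgeTrace A i) (edgeTrace B (π i)) (hπ i).symm
  have hmem : ∀ i b, (π i, τ i b) ∈ B ↔ (i, b) ∈ A := fun i b => by
    simpa [edgeTrace] using (congrArg (τ i b ∈ ·) (hτ i)).symm
  refine ⟨prodShear π τ, Subgroup.mem_centralizer_singleton_iff.mpr ?_, ?_⟩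
  · ext ⟨i, b⟩ <;> simp [matchingSwap, Perm.apply_not_bool]
  · ext w
    obtain ⟨⟨i, b⟩, rfl⟩ := (prodShear π τ).surjective w
    rw [← Perm.smul_def, smul_mem_smul_finset_iff, Perm.smul_def, prodShear_apply]
    exact (hmem i b).symm

lemma eq_of_forall_edgeTrace_eq {A B : Finset (Fin n × Bool)}
    (h : ∀ i, edgeTrace A i = edgeTrace B i) : A = B := by
  ext ⟨i, b⟩
  simpa [edgeTrace] using congrArg (b ∈ ·) (h i)

lemma card_matchFamily_le : #(matchFamily n p s) ≤ n.choose p * ((n - p).choose s * 2 ^ s) := by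
  set T := (powersetCard p (univ : Finset (Fin n))).sigma fun P =>
    (powersetCard s (univ \ P)).sigma fun S => S.powerset
  have hT : #T = n.choose p * ((n - p).choose s * 2 ^ s) := by
    rw [card_sigma, sum_congr rfl fun P hP => ?_, sum_const, card_powersetCard, card_univ,
      Fintype.card_fin, smul_eq_mul]
    rw [card_sigma, sum_congr rfl fun S hS => by rw [card_powerset, (mem_powersetCard.mp hS).2],
      sum_const, card_powersetCard, card_sdiff_of_subset (subset_univ P), card_univ,
      Fintype.card_fin, (mem_powersetCard.mp hP).2, smul_eq_mul]
  refine hT ▸ card_le_card_of_injOn (fun A => ⟨spannedEdges A,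
      ({i | #(edgeTrace A i) = 1} : Finset _), ({i | edgeTrace A i = {true}} : Finset _)⟩)
    (fun A hA => ?_) fun A hA A' hA' h => ?_
  · obtain ⟨hcard, hedges⟩ := mem_matchFamily.mp hA
    obtain ⟨-, hsum⟩ := card_filter_card_edgeTrace A
    rw [filter_card_edgeTrace_eq_two] at hsum
    simp only [T, coe_sigma, Set.mem_sigma_iff, mem_coe, mem_powersetCard, mem_powerset]
    refine ⟨⟨subset_univ _, hedges⟩, ⟨fun i hi => ?_, by omega⟩, fun i hi => ?_⟩
    · rw [mem_filter] at hi
      simp [← filter_card_edgeTrace_eq_two, hi.2]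
    · rw [mem_filter] at hi ⊢
      simp [hi.2]
  · simp only [Sigma.mk.inj_iff, heq_eq_eq] at h
    obtain ⟨hP, hS, hU⟩ := h
    refine eq_of_forall_edgeTrace_eq fun i => ?_
    have h₂ := congrArg (i ∈ ·) hP
    have h₁ := congrArg (i ∈ ·) hS
    have ht := congrArg (i ∈ ·) hU
    simp only [← filter_card_edgeTrace_eq_two, mem_filter, mem_univ, true_and,
      eq_iff_iff] at h₂ h₁ ht
    have := card_edgeTrace_le A i
    have := card_edgeTrace_le A' i
    have hbool : ∀ x y : Finset Bool, #x = #y → (x = {true} ↔ y = {true}) → x = y := by decide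
    exact hbool _ _ (by omega) ht

end Matching

section Arrangement

variable {n p s : ℕ}

def matchingPos (a d : ℕ) (v : Fin n × Bool) : ZMod (2 * n) :=
  (a * v.1.val + d * v.2.toNat : ℕ)

lemma matchingPos_one_injective : Injective (matchingPos (n := n) 1 n) := by
  rintro ⟨i, b⟩ ⟨i', b'⟩ h
  have hi := i.isLt
  have hi' := i'.isLt
  rw [matchingPos, matchingPos, ZMod.natCast_eq_natCast_iff', Nat.mod_eq_of_lt,
    Nat.mod_eq_of_lt] at h
  · cases b <;> cases b' <;> simp at h <;> first | omega | exact Prod.ext (Fin.ext h) rfl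
  all_goals cases b <;> cases b' <;> simp <;> omega

lemma natCast_two_mul_val_injective :
    Injective fun i : Fin n => ((2 * i.val : ℕ) : ZMod (2 * n)) := by
  intro i i' h
  simp only [ZMod.natCast_eq_natCast_iff'] at h
  rw [Nat.mod_eq_of_lt (by omega), Nat.mod_eq_of_lt (by omega)] at h
  exact Fin.ext (by omega)

lemma matchingPos_two_injective {d : ℕ} (hd : Odd d) : Injective (matchingPos (n := n) 2 d) := by
  rintro ⟨i, b⟩ ⟨i', b'⟩ h
  have hpar := ((ZMod.natCast_eq_natCast_iff _ _ _).mp h).of_mul_right n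
  obtain ⟨r, rfl⟩ := hd
  unfold Nat.ModEq at hpar
  cases b <;> cases b' <;> simp only [matchingPos, Bool.toNat_false, Bool.toNat_true, mul_zero,
    add_zero, mul_one, Nat.cast_add, add_left_inj] at h hpar ⊢ <;> try omega
  all_goals exact congrArg (·, _) (natCast_two_mul_val_injective h)

variable [NeZero n]

lemma mem_spannedEdges_arc {a d k : ℕ} (hkd : k + d ≤ 2 * n) (y : ZMod (2 * n)) (i : Fin n) :
    i ∈ spannedEdges (arc (matchingPos a d) k y) ↔
      (((a * i.val : ℕ) : ZMod (2 * n)) - y).val + d < k := by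
  rw [← ZMod.val_lt_and_val_add_lt_iff _ hkd]
  simp only [spannedEdges, mem_filter, mem_univ, true_and, mem_arc, matchingPos,
    Bool.toNat_false, Bool.toNat_true, mul_zero, add_zero, mul_one, Nat.cast_add]
  ring_nf

lemma card_filter_val_two_mul_sub_lt (y : ZMod (2 * n)) {q : ℕ} (hq : q ≤ n) :
    #{i : Fin n | (((2 * i.val : ℕ) : ZMod (2 * n)) - y).val < 2 * q} = q := by
  set u : Fin n → ℕ := fun i => (((2 * i.val : ℕ) : ZMod (2 * n)) - y).val
  have hu : ∀ i, ((u i + y.val : ℕ) : ZMod (2 * n)) = (2 * i.val : ℕ) := fun i => by simp [u]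
  have hpar : ∀ i, (u i + y.val) % 2 = 0 := fun i => by
    have := ((ZMod.natCast_eq_natCast_iff _ _ _).mp (hu i)).of_mul_right n
    unfold Nat.ModEq at this
    omega
  refine (card_nbij (fun i => u i / 2) (fun i hi => ?_) (fun i hi i' hi' h => ?_)
    fun r hr => ?_).trans (card_range q)
  · have hi : u i < 2 * q := by simpa [u] using hi
    exact mem_range.mpr (show u i / 2 < q by omega)
  · have hpi := hpar i
    have hpi' := hpar i'
    have heq : u i = u i' := by simp only at h; omega
    exact natCast_two_mul_val_injective (by simp only; rw [← hu, ← hu, heq])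
  · have hr := mem_range.mp hr
    have hy := y.val_lt
    set v := 2 * r + y.val % 2
    set w := y.val + v
    let i : Fin n := ⟨w / 2 % n, Nat.mod_lt _ (NeZero.pos n)⟩
    have hi : ((2 * i.val : ℕ) : ZMod (2 * n)) = (w : ℕ) := by
      rw [ZMod.natCast_eq_natCast_iff', ← Nat.mul_mod_mul_left, Nat.mod_mod_of_dvd _ dvd_rfl,
        show 2 * (w / 2) = w by omega]
    have hui : u i = v := by
      simp only [u, hi, w, Nat.cast_add, ZMod.natCast_zmod_val, add_sub_cancel_left]
      exact ZMod.val_natCast_of_lt (by omega)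
    refine ⟨i, ?_, by simp only; omega⟩
    simp only [coe_filter, mem_univ, true_and, Set.mem_ofPred_eq]
    change u i < 2 * q
    omega

lemma card_arc_matchingPos {a d k : ℕ} (hpos : Injective (matchingPos (n := n) a d))
    (hk : k ≤ 2 * n) (y : ZMod (2 * n)) : #(arc (matchingPos a d) k y) = k :=
  card_arc ((Fintype.bijective_iff_injective_and_card _).mpr ⟨hpos, by simp [mul_comm]⟩) hk y

lemma arc_matchingPos_one_mem_matchFamily (hs : s ≤ n) (y : ZMod (2 * n)) :
    arc (matchingPos 1 n) s y ∈ matchFamily n 0 s := by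
  refine mem_matchFamily.mpr ⟨?_, card_eq_zero.mpr (eq_empty_of_forall_notMem fun i hi => ?_)⟩
  · rw [card_arc_matchingPos matchingPos_one_injective (by omega), mul_zero, zero_add]
  · rw [mem_spannedEdges_arc (by omega)] at hi
    omega

lemma arc_matchingPos_two_mem_matchFamily_of_odd (hs : Odd s) (h : 2 * p + s ≤ n)
    (y : ZMod (2 * n)) : arc (matchingPos 2 s) (2 * p + s) y ∈ matchFamily n p s := by
  refine mem_matchFamily.mpr
    ⟨card_arc_matchingPos (matchingPos_two_injective hs) (by omega) y, ?_⟩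
  have hedges : spannedEdges (arc (matchingPos 2 s) (2 * p + s) y) =
      ({i | (((2 * i.val : ℕ) : ZMod (2 * n)) - y).val < 2 * p} : Finset (Fin n)) := by
    ext i
    rw [mem_spannedEdges_arc (by omega), mem_filter]
    simp only [mem_univ, true_and]
    omega
  rw [hedges, card_filter_val_two_mul_sub_lt y (by omega)]

lemma arc_matchingPos_two_mem_matchFamily_of_even (hs : Even s) (hp : 0 < p)
    (h : 2 * p + s ≤ n) (j : ℕ) :
    arc (matchingPos 2 (s + 1)) (2 * p + s) (2 * j : ℕ) ∈ matchFamily n p s := by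
  refine mem_matchFamily.mpr
    ⟨card_arc_matchingPos (matchingPos_two_injective hs.add_one) (by omega) _, ?_⟩
  have hedges : spannedEdges (arc (matchingPos 2 (s + 1)) (2 * p + s) (2 * j : ℕ)) =
      ({i | (((2 * i.val : ℕ) : ZMod (2 * n)) - (2 * j : ℕ)).val < 2 * p} : Finset (Fin n)) := by
    ext i
    set u := (((2 * i.val : ℕ) : ZMod (2 * n)) - (2 * j : ℕ)).val
    have hu : ((u + 2 * j : ℕ) : ZMod (2 * n)) = (2 * i.val : ℕ) := by simp [u]
    have hpar := ((ZMod.natCast_eq_natCast_iff _ _ _).mp hu).of_mul_right n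
    unfold Nat.ModEq at hpar
    rw [mem_spannedEdges_arc (by omega), mem_filter]
    simp only [mem_univ, true_and]
    omega
  rw [hedges, card_filter_val_two_mul_sub_lt _ (by omega)]

lemma card_mul_le_of_forall_arc_mem {m c t : ℕ} [NeZero m] (pos : Fin n × Bool → ZMod (2 * n))
    (hc : c * m = 2 * n) (hk : c * t = 2 * p + s) (hkn : 2 * p + s ≤ n)
    (harc : ∀ j : ZMod m, arc pos (2 * p + s) (c * j.val : ℕ) ∈ matchFamily n p s)
    {F : Finset (Finset (Fin n × Bool))} (hF : F ⊆ matchFamily n p s) (hint : IsIntersecting F) :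
    2 * n * #F ≤ (2 * p + s) * #(matchFamily n p s) := by
  classical
  rw [← hk] at harc hkn ⊢
  have hdensity := hint.card_mul_le (G := Subgroup.centralizer {matchingSwap (n := n)}) hF
    (fun g A hA => smul_mem_matchFamily g.2 hA)
    (fun A hA B hB =>
      let ⟨g, hg, hgA⟩ := exists_mem_centralizer_smul_eq hA hB
      ⟨⟨g, hg⟩, hgA⟩)
    harc fun S hS => card_le_of_arc_inter_nonempty pos hc (by omega) hS
  rw [ZMod.card] at hdensity
  calc 2 * n * #F = c * (m * #F) := by rw [← hc, mul_assoc]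
    _ ≤ c * (t * #(matchFamily n p s)) := Nat.mul_le_mul_left c hdensity
    _ = c * t * #(matchFamily n p s) := (mul_assoc ..).symm

end Arrangement

/-- For `1 ≤ 2p+s ≤ n`, every intersecting family `F ⊆ H^{(p,s)}(n)` satisfies
`2n·|F| ≤ (2p+s)·C(n,p)·C(n-p,s)·2^s`. -/
theorem matchFamily_intersecting_bound (n p s : ℕ) (h1 : 1 ≤ 2 * p + s) (h2 : 2 * p + s ≤ n)
    (F : Finset (Finset (Fin n × Bool))) (hF : F ⊆ matchFamily n p s)
    (hint : IsIntersecting F) :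
    2 * n * F.card ≤ (2 * p + s) * (n.choose p * (n - p).choose s * 2 ^ s) := by
  have : NeZero n := ⟨by omega⟩
  have key : 2 * n * #F ≤ (2 * p + s) * #(matchFamily n p s) := by
    obtain rfl | hp := Nat.eq_zero_or_pos p
    · exact card_mul_le_of_forall_arc_mem (c := 1) (matchingPos 1 n) (one_mul _) (by ring) h2
        (fun _ => by simpa using arc_matchingPos_one_mem_matchFamily (by omega) _) hF hint
    obtain hs | hs := Nat.even_or_odd s
    · obtain ⟨r, hr⟩ := hs
      exact card_mul_le_of_forall_arc_mem (c := 2) (t := p + r) (matchingPos 2 (s + 1)) rfl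
        (by omega) h2 (fun j => arc_matchingPos_two_mem_matchFamily_of_even ⟨r, hr⟩ hp h2 j.val)
        hF hint
    · exact card_mul_le_of_forall_arc_mem (c := 1) (matchingPos 2 s) (one_mul _) (one_mul _) h2
        (fun _ => arc_matchingPos_two_mem_matchFamily_of_odd hs h2 _) hF hint
  calc 2 * n * #F ≤ (2 * p + s) * #(matchFamily n p s) := key
    _ ≤ (2 * p + s) * (n.choose p * ((n - p).choose s * 2 ^ s)) :=
      Nat.mul_le_mul_left _ card_matchFamily_le
    _ = (2 * p + s) * (n.choose p * (n - p).choose s * 2 ^ s) := by rw [mul_assoc (n.choose p)]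
end

section
/- Let n, s be natural numbers with 1 ≤ s ≤ n. Every intersecting family F ⊆ H^{(0,s)}(n) (i.e., an intersecting family of s-element independent sets of the matching M_n) satisfies |F| ≤ C(n − 1, s − 1) · 2^{s − 1}, where C denotes the binomial coefficient. -/
/-!
Katona's circle method for signed sets. Place the `2n` vertices on a circle so that antipodal
points are the edges of the matching; then every arc of length `s ≤ n` is an independent
`s`-set, and an intersecting family contains at most `s` of the `2n` arcs of any such circle.
The signed permutations (the centralizer of the involution swapping the two ends of each edge)
act transitively on independent `s`-sets, so averaging over them shows that an intersecting
family `F` makes up at most a fraction `s / 2n` of all `C(n, s) · 2^s` independent `s`-sets.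
-/

open Finset

namespace ZMod

variable {m : ℕ}

theorem natCast_ne_zero_of_pos_of_lt {x : ℕ} (h0 : 0 < x) (hx : x < m) : (x : ZMod m) ≠ 0 :=
  fun h => absurd (Nat.le_of_dvd h0 ((natCast_eq_zero_iff x m).1 h)) (by omega)

def cycleArc (s : ℕ) (j : ZMod m) : Finset (ZMod m) :=
  (range s).image (fun t : ℕ => j + t)

theorem mem_cycleArc {s : ℕ} {j x : ZMod m} : x ∈ cycleArc s j ↔ ∃ t < s, j + t = x := by
  simp [cycleArc]

theorem card_cycleArc {s : ℕ} (hsm : s ≤ m) (j : ZMod m) : #(cycleArc s j) = s := by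
  rw [cycleArc, card_image_of_injOn, card_range]
  intro a ha b hb hab
  simp only [coe_range, Set.mem_Iio, add_right_inj] at ha hb hab
  rwa [natCast_eq_natCast_iff' a b m, Nat.mod_eq_of_lt (by omega),
    Nat.mod_eq_of_lt (by omega)] at hab

theorem disjoint_cycleArc_add {s : ℕ} (hsm : 2 * s ≤ m) (j : ZMod m) :
    Disjoint (cycleArc s j) (cycleArc s (j + s)) := by
  refine disjoint_left.2 fun x hx hx' => ?_
  obtain ⟨a, ha, rfl⟩ := mem_cycleArc.1 hx
  obtain ⟨b, hb, hab⟩ := mem_cycleArc.1 hx'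
  refine natCast_ne_zero_of_pos_of_lt (m := m) (x := s + b - a) (by omega) (by omega) ?_
  push_cast [show a ≤ s + b by omega]
  linear_combination hab

theorem card_le_of_cycleArc_intersecting {s : ℕ} (hsm : 2 * s ≤ m) {T : Finset (ZMod m)}
    (hT : ∀ j ∈ T, ∀ k ∈ T, (cycleArc s j ∩ cycleArc s k).Nonempty) : #T ≤ s := by
  obtain rfl | ⟨j₀, hj₀⟩ := T.eq_empty_or_nonempty
  · simp
  have hmeet : ∀ k ∈ T, ∃ a < s, ∃ b < s, k + a = j₀ + b := fun k hk => by
    obtain ⟨x, hx⟩ := hT k hk j₀ hj₀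
    obtain ⟨a, ha, rfl⟩ := mem_cycleArc.1 (mem_inter.1 hx).1
    obtain ⟨b, hb, hab⟩ := mem_cycleArc.1 (mem_inter.1 hx).2
    exact ⟨a, ha, b, hb, hab.symm⟩
  choose! a ha b hb hab using hmeet
  -- Every `k ∈ T` is `j₀ + (b k - a k)` with `-s < b k - a k < s`. Offsets differing by `s`
  -- would give disjoint arcs, so the offset reduced mod `s` is injective on `T`.
  let d : ZMod m → ℕ := fun k => if a k ≤ b k then b k - a k else b k + s - a k
  have hshift : ∀ k ∈ T, ∀ k' ∈ T, k ≠ k' + s := fun k hk k' hk' h =>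
    not_disjoint_iff_nonempty_inter.2 (h ▸ hT k' hk' k hk) (disjoint_cycleArc_add hsm k')
  have hd : ∀ k ∈ T, d k ∈ range s := fun k hk => by
    have := ha k hk; have := hb k hk
    rw [mem_range]; dsimp only [d]; split_ifs <;> omega
  have hinj : Set.InjOn d T := by
    intro k hk k' hk' hkk'
    have := ha k hk; have := hb k hk; have := ha k' hk'; have := hb k' hk'
    obtain h | h | h : b k + a k' = b k' + a k ∨ b k + a k' = b k' + a k + s ∨
        b k' + a k = b k + a k' + s := by
      dsimp only [d] at hkk'; split_ifs at hkk' <;> omega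
    all_goals replace h := congrArg (Nat.cast : ℕ → ZMod m) h; push_cast at h
    · linear_combination hab k hk - hab k' hk' + h
    · exact absurd (by linear_combination hab k hk - hab k' hk' + h) (hshift k hk k' hk')
    · exact absurd (by linear_combination hab k' hk' - hab k hk + h) (hshift k' hk' k hk)
  calc #T ≤ #(range s) := card_le_card_of_injOn d hd hinj
    _ = s := card_range s

end ZMod

open Pointwise MulAction

section Averaging

variable {G α : Type*} [Group G] [Fintype G] [MulAction G α] [DecidableEq α]

theorem card_filter_smul_eq_of_mem_orbit {x y : α} (hy : y ∈ orbit G x) :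
    #{g : G | g • x = y} = #{g : G | g • x = x} := by
  obtain ⟨h, rfl⟩ := hy
  refine card_nbij' (h⁻¹ * ·) (h * ·) ?_ ?_ ?_ ?_ <;> intro g <;> simp [mul_smul, inv_smul_eq_iff]

theorem card_filter_smul_mem_mul_card_eq {x : α} {H F : Finset α} (hH : orbit G x = H)
    (hFH : F ⊆ H) : #{g : G | g • x ∈ F} * #H = #F * Fintype.card G := by
  have hfiber : ∀ y ∈ H, #{g : G | g • x = y} = #{g : G | g • x = x} := fun y hy =>
    card_filter_smul_eq_of_mem_orbit (by rw [hH]; exact hy)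
  have hG : Fintype.card G = #H * #{g : G | g • x = x} := by
    rw [← card_univ, card_eq_sum_card_fiberwise (f := (· • x)) (t := H)
      (fun g _ => by simp [← hH])]
    simp [sum_congr rfl hfiber]
  have hF : #{g : G | g • x ∈ F} = #F * #{g : G | g • x = x} := by
    rw [card_eq_sum_card_fiberwise (f := (· • x)) (s := {g : G | g • x ∈ F}) (t := F)
      (fun g hg => (mem_filter.1 hg).2), ← smul_eq_mul, ← sum_const]
    refine sum_congr rfl fun y hy => ?_
    rw [filter_filter, ← hfiber y (hFH hy)]
    exact congrArg card (filter_congr fun g _ => and_iff_right_of_imp fun h => h ▸ hy)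
  rw [hF, hG]; ring

theorem card_mul_card_le_of_forall_card_filter_le {ι : Type*} {x : ι → α} {T : Finset ι}
    {H F : Finset α} (hH : ∀ j ∈ T, orbit G (x j) = H) (hFH : F ⊆ H) {s : ℕ}
    (hs : ∀ g : G, #{j ∈ T | g • x j ∈ F} ≤ s) : #F * #T ≤ s * #H := by
  have hswap : ∑ g : G, #{j ∈ T | g • x j ∈ F} = ∑ j ∈ T, #{g : G | g • x j ∈ F} := by
    simp only [card_filter]; exact sum_comm
  refine Nat.le_of_mul_le_mul_right (c := Fintype.card G) ?_ Fintype.card_pos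
  calc #F * #T * Fintype.card G = ∑ j ∈ T, #{g : G | g • x j ∈ F} * #H := by
        rw [sum_congr rfl fun j hj => card_filter_smul_mem_mul_card_eq (hH j hj) hFH, sum_const,
          smul_eq_mul]; ring
    _ = (∑ g : G, #{j ∈ T | g • x j ∈ F}) * #H := by rw [hswap, sum_mul]
    _ ≤ (∑ _g : G, s) * #H := by gcongr with g; exact hs g
    _ = s * #H * Fintype.card G := by rw [sum_const, card_univ, smul_eq_mul]; ring

end Averaging

section SignedSets

variable {ι : Type*}

def flipSign (ι : Type*) : Equiv.Perm (ι × Bool) :=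
  Equiv.prodCongr (Equiv.refl ι) Equiv.boolNot

@[simp]
theorem flipSign_apply (x : ι × Bool) : flipSign ι x = (x.1, !x.2) := rfl

theorem fst_eq_fst_iff {x y : ι × Bool} : x.1 = y.1 ↔ y = x ∨ y = flipSign ι x := by
  obtain ⟨i, b⟩ := x; obtain ⟨j, c⟩ := y; cases b <;> cases c <;> simp [eq_comm]

def hyperoctahedral (ι : Type*) : Subgroup (Equiv.Perm (ι × Bool)) :=
  Subgroup.centralizer {flipSign ι}

namespace hyperoctahedral

theorem smul_flipSign (g : hyperoctahedral ι) (x : ι × Bool) :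
    g • flipSign ι x = flipSign ι (g • x) :=
  congrArg (· x) (Subgroup.mem_centralizer_singleton_iff.1 g.2)

theorem fst_smul_eq_fst_smul_iff (g : hyperoctahedral ι) {x y : ι × Bool} :
    (g • x).1 = (g • y).1 ↔ x.1 = y.1 := by
  rw [fst_eq_fst_iff, fst_eq_fst_iff, ← smul_flipSign, smul_left_cancel_iff, smul_left_cancel_iff]

def mk (ρ : Equiv.Perm ι) (δ : ι → Bool) : hyperoctahedral ι :=
  ⟨Equiv.prodShear ρ fun i => Function.Involutive.toPerm (· ^^ δ i) fun b => by simp,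
    Subgroup.mem_centralizer_singleton_iff.2 <|
      Equiv.ext fun x => by simp [Function.Involutive.toPerm]⟩

theorem mk_smul (ρ : Equiv.Perm ι) (δ : ι → Bool) (x : ι × Bool) :
    mk ρ δ • x = (ρ x.1, x.2 ^^ δ x.1) := rfl

end hyperoctahedral

def IsSignedSet (A : Finset (ι × Bool)) : Prop :=
  Set.InjOn Prod.fst (A : Set (ι × Bool))

theorem isSignedSet_iff {A : Finset (ι × Bool)} :
    IsSignedSet A ↔ ∀ i, ¬((i, false) ∈ A ∧ (i, true) ∈ A) := by
  refine ⟨fun hA i hi => by simpa using hA hi.1 hi.2 rfl, fun hA => ?_⟩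
  rintro ⟨i, b⟩ hx ⟨j, c⟩ hy (rfl : i = j)
  cases b <;> cases c <;> simp_all

variable [DecidableEq ι]

namespace IsSignedSet

variable {A : Finset (ι × Bool)}

theorem decide_mem_true (hA : IsSignedSet A) {i : ι} {b : Bool} (h : (i, b) ∈ A) :
    decide ((i, true) ∈ A) = b := by
  cases b
  · rw [decide_eq_false_iff_not]
    exact fun h' => absurd (hA h h' rfl) (by simp)
  · simpa using h

theorem smul (hA : IsSignedSet A) (g : hyperoctahedral ι) : IsSignedSet (g • A) := by
  intro x hx y hy hxy
  obtain ⟨x, hx', rfl⟩ := mem_smul_finset.1 hx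
  obtain ⟨y, hy', rfl⟩ := mem_smul_finset.1 hy
  exact congrArg (g • ·) (hA hx' hy' ((hyperoctahedral.fst_smul_eq_fst_smul_iff g).1 hxy))

end IsSignedSet

variable [Fintype ι]

theorem hyperoctahedral.exists_smul_eq {A B : Finset (ι × Bool)} (hA : IsSignedSet A)
    (hB : IsSignedSet B) (hcard : #A = #B) : ∃ g : hyperoctahedral ι, g • A = B := by
  have hS : #(A.image Prod.fst) = #(B.image Prod.fst) := by
    rw [card_image_of_injOn hA, card_image_of_injOn hB, hcard]
  let ρ : Equiv.Perm ι := (equivOfCardEq hS).extendSubtype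
  refine ⟨mk ρ fun i => decide ((i, true) ∈ A) ^^ decide ((ρ i, true) ∈ B),
    eq_of_subset_of_card_le (fun y hy => ?_) (by rw [card_smul_finset, hcard])⟩
  obtain ⟨⟨i, b⟩, hib, rfl⟩ := mem_smul_finset.1 hy
  obtain ⟨⟨j, c⟩, hjc, hj : j = ρ i⟩ := mem_image.1 ((equivOfCardEq hS).extendSubtype_mem i
    (mem_image_of_mem Prod.fst hib))
  subst hj
  rw [mk_smul, ← hA.decide_mem_true hib, ← Bool.xor_assoc, Bool.xor_self, Bool.false_xor,
    hB.decide_mem_true hjc]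
  exact hjc

theorem hyperoctahedral.orbit_eq {A : Finset (ι × Bool)} (hA : IsSignedSet A) :
    orbit (hyperoctahedral ι) A = {B | IsSignedSet B ∧ #B = #A} := by
  ext B
  constructor
  · rintro ⟨g, rfl⟩
    exact ⟨hA.smul g, card_smul_finset g A⟩
  · rintro ⟨hB, hcard⟩
    exact exists_smul_eq hA hB hcard.symm

theorem card_le_of_forall_isSignedSet {s : ℕ} {𝒜 : Finset (Finset (ι × Bool))}
    (h𝒜 : ∀ A ∈ 𝒜, IsSignedSet A ∧ #A = s) : #𝒜 ≤ (Fintype.card ι).choose s * 2 ^ s := by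
  have hsub : 𝒜 ⊆ ((powersetCard s univ).sigma fun S => S.powerset).image
      fun p => p.1.image fun i => (i, decide (i ∈ p.2)) := by
    intro A hA
    obtain ⟨hA, hcard⟩ := h𝒜 A hA
    refine mem_image.2 ⟨⟨A.image Prod.fst, (A.image Prod.fst).filter fun i => (i, true) ∈ A⟩,
      by simp [card_image_of_injOn hA, hcard], ?_⟩
    rw [image_image]
    conv_rhs => rw [← image_id (s := A)]
    refine image_congr fun ⟨i, b⟩ hib => ?_
    simp only [Function.comp_apply, id, Prod.mk.injEq, true_and, ← hA.decide_mem_true hib]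
    simp [mem_image_of_mem Prod.fst hib]
  calc #𝒜 ≤ #((powersetCard s univ).sigma fun S => S.powerset) :=
        (card_le_card hsub).trans card_image_le
    _ = (Fintype.card ι).choose s * 2 ^ s := by
      rw [card_sigma, sum_congr rfl fun S hS => by rw [card_powerset, (mem_powersetCard.1 hS).2],
        sum_const, card_powersetCard, card_univ, smul_eq_mul]

end SignedSets

theorem mem_matchFamily_zero {n s : ℕ} {A : Finset (Fin n × Bool)} :
    A ∈ matchFamily n 0 s ↔ IsSignedSet A ∧ #A = s := by
  simp [matchFamily, isSignedSet_iff, filter_eq_empty_iff, and_comm]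

section Circle

variable {n : ℕ} [NeZero n]

noncomputable def circleEquiv (n : ℕ) [NeZero n] : Fin n × Bool ≃ ZMod (2 * n) :=
  Equiv.ofBijective (fun x => ((x.1 + n * x.2.toNat : ℕ) : ZMod (2 * n))) <| by
    refine (Fintype.bijective_iff_injective_and_card _).2 ⟨?_, by simp [mul_comm]⟩
    have hlt (k : Fin n) (d : Bool) : (k : ℕ) + n * d.toNat < 2 * n := by
      cases d <;> simp <;> omega
    rintro ⟨i, b⟩ ⟨j, c⟩ h
    rw [ZMod.natCast_eq_natCast_iff', Nat.mod_eq_of_lt (hlt i b), Nat.mod_eq_of_lt (hlt j c)] at h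
    cases b <;> cases c <;> simp [Fin.ext_iff] at h ⊢ <;> omega

theorem circleEquiv_flipSign (x : Fin n × Bool) :
    circleEquiv n (flipSign _ x) = circleEquiv n x + n := by
  have h2n : (2 * n : ZMod (2 * n)) = 0 := by exact_mod_cast ZMod.natCast_self (2 * n)
  obtain ⟨i, _ | _⟩ := x <;> simp [circleEquiv]
  linear_combination -h2n

noncomputable def signedArc (s : ℕ) (j : ZMod (2 * n)) : Finset (Fin n × Bool) :=
  (ZMod.cycleArc s j).map (circleEquiv n).symm.toEmbedding

variable {s : ℕ}

theorem card_signedArc (hsn : s ≤ n) (j : ZMod (2 * n)) : #(signedArc s j) = s := by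
  rw [signedArc, card_map, ZMod.card_cycleArc (by omega)]

theorem isSignedSet_signedArc (hsn : s ≤ n) (j : ZMod (2 * n)) :
    IsSignedSet (signedArc s j) := by
  intro x hx y hy hxy
  rw [mem_coe, signedArc, mem_map_equiv, Equiv.symm_symm, ZMod.mem_cycleArc] at hx hy
  obtain ⟨a, ha, hax⟩ := hx
  obtain ⟨b, hb, hby⟩ := hy
  obtain rfl | rfl := fst_eq_fst_iff.1 hxy
  · rfl
  rw [circleEquiv_flipSign, ← hax] at hby
  have h2n : ((2 * n : ℕ) : ZMod (2 * n)) = 0 := ZMod.natCast_self _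
  refine absurd ?_
    (ZMod.natCast_ne_zero_of_pos_of_lt (m := 2 * n) (x := b + n - a) (by omega) (by omega))
  push_cast [show a ≤ b + n by omega] at h2n ⊢
  linear_combination hby + h2n

theorem orbit_signedArc (hsn : s ≤ n) (j : ZMod (2 * n)) :
    orbit (hyperoctahedral (Fin n)) (signedArc s j) = matchFamily n 0 s := by
  ext B
  simp [hyperoctahedral.orbit_eq (isSignedSet_signedArc hsn j), mem_matchFamily_zero,
    card_signedArc hsn]

theorem card_filter_smul_signedArc_mem_le (hsn : s ≤ n) {F : Finset (Finset (Fin n × Bool))}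
    (hF : IsIntersecting F) (g : hyperoctahedral (Fin n)) :
    #{j | g • signedArc s j ∈ F} ≤ s :=
  ZMod.card_le_of_cycleArc_intersecting (by omega) fun j hj k hk => by
    have := hF _ (mem_filter.1 hj).2 _ (mem_filter.1 hk).2
    rwa [← smul_finset_inter, smul_finset_nonempty, signedArc, signedArc, ← map_inter,
      map_nonempty] at this

end Circle

/-- For `1 ≤ s ≤ n`, every intersecting family `F ⊆ H^{(0,s)}(n)` of `s`-element
independent sets of `M_n` satisfies `|F| ≤ C(n-1, s-1) · 2^{s-1}`. -/
theorem matchFamily_0s_intersecting_bound (n s : ℕ) (hs : 1 ≤ s) (hn : s ≤ n)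
    (F : Finset (Finset (Fin n × Bool))) (hF : F ⊆ matchFamily n 0 s)
    (hint : IsIntersecting F) :
    F.card ≤ (n - 1).choose (s - 1) * 2 ^ (s - 1) := by
  classical
  have : NeZero n := ⟨by omega⟩
  have hcircle : #F * (2 * n) ≤ s * #(matchFamily n 0 s) := by
    simpa [ZMod.card] using card_mul_card_le_of_forall_card_filter_le
      (G := hyperoctahedral (Fin n)) (T := univ) (fun j _ => orbit_signedArc hn j) hF
      (card_filter_smul_signedArc_mem_le hn hint)
  have hfamily : #(matchFamily n 0 s) ≤ n.choose s * 2 ^ s := by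
    simpa using card_le_of_forall_isSignedSet fun A hA => mem_matchFamily_zero.1 hA
  obtain ⟨t, rfl⟩ : ∃ t, s = t + 1 := ⟨s - 1, by omega⟩
  obtain ⟨m, rfl⟩ : ∃ m, n = m + 1 := ⟨n - 1, by omega⟩
  simp only [Nat.add_sub_cancel]
  refine Nat.le_of_mul_le_mul_right (c := 2 * (m + 1)) ?_ (by omega)
  calc #F * (2 * (m + 1)) ≤ (t + 1) * ((m + 1).choose (t + 1) * 2 ^ (t + 1)) :=
        hcircle.trans (by gcongr)
    _ = 2 ^ t * 2 * ((m + 1).choose (t + 1) * (t + 1)) := by ring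
    _ = m.choose t * 2 ^ t * (2 * (m + 1)) := by rw [← Nat.add_one_mul_choose_eq]; ring
end
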